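/- arXiv:0810.5641 — 3 statements merged into one kernel-verified Lean document; each statement's English description precedes it below -/
import Mathlib

section
/- Let ⟨⟨θ_α : α ≤ κ⟩, ⟨F_{αβ} : α < β ≤ κ⟩⟩ be a simplified (κ,1)-morass, let α < β < κ, τ₁, τ₂ < θ_α, and f₁, f₂ ∈ F_{αβ} with f₁(τ₁) = f₂(τ₂). Then τ₁ = τ₂ and f₁↾τ₁ = f₂↾τ₁. -/
noncomputable section

open Cardinal Set

/-- A simplified `(κ,1)`-morass (Velleman).  Morass maps are coded as total functions on
ordinals; all axioms only constrain their values below the relevant `θ α`. -/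
structure SimplifiedMorass : Type 2 where
  κ : Cardinal.{0}
  kappa_reg : κ.IsRegular
  kappa_unc : Cardinal.aleph0 < κ
  θ : Ordinal.{0} → Ordinal.{0}
  F : Ordinal.{0} → Ordinal.{0} → Set (Ordinal.{0} → Ordinal.{0})
  /-- (P0)(a) `θ 0 = 1` -/
  theta_zero : θ 0 = 1
  /-- (P0)(a) `θ κ = κ⁺` -/
  theta_top : θ κ.ord = (Order.succ κ).ord
  /-- (P0)(a) `0 < θ α` for `α < κ` -/
  theta_pos : ∀ α, α < κ.ord → 0 < θ α
  /-- (P0)(a) `θ α < κ` for `α < κ` -/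
  theta_lt : ∀ α, α < κ.ord → θ α < κ.ord
  /-- (P0)(b) every `f ∈ F α β` is an order preserving map `θ α → θ β` -/
  F_maps : ∀ α β, α < β → β ≤ κ.ord → ∀ f ∈ F α β,
      (∀ x, x < θ α → f x < θ β) ∧ ∀ x y, x < y → y < θ α → f x < f y
  /-- (P1) `|F α β| < κ` for `α < β < κ` -/
  F_card : ∀ α β, α < β → β < κ.ord → Cardinal.mk (F α β) < Cardinal.lift.{1} κ
  /-- (P2), one inclusion: compositions of morass maps are morass maps -/
  F_comp_mem : ∀ α β γ, α < β → β < γ → γ ≤ κ.ord → ∀ f ∈ F β γ, ∀ g ∈ F α β,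
      ∃ h ∈ F α γ, ∀ x, x < θ α → h x = f (g x)
  /-- (P2), the other inclusion: every morass map factors through any intermediate level -/
  F_comp_factor : ∀ α β γ, α < β → β < γ → γ ≤ κ.ord → ∀ h ∈ F α γ,
      ∃ f ∈ F β γ, ∃ g ∈ F α β, ∀ x, x < θ α → h x = f (g x)
  /-- (P3) `F α (α+1) = {id ↾ θ α, h_α}` where `h_α ↾ δ = id` and `h_α δ ≥ θ α` -/
  F_succ : ∀ α, α < κ.ord →
      (∃ i ∈ F α (α + 1), ∀ x, x < θ α → i x = x) ∧
      ∃ h ∈ F α (α + 1), (∃ δ, δ < θ α ∧ (∀ x, x < δ → h x = x) ∧ θ α ≤ h δ) ∧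
        ∀ f ∈ F α (α + 1), (∀ x, x < θ α → f x = x) ∨ (∀ x, x < θ α → f x = h x)
  /-- (P4) factoring at limit levels -/
  F_limit : ∀ α, α ≤ κ.ord → Order.IsSuccLimit α → ∀ β₁ β₂, β₁ < α → β₂ < α →
      ∀ f₁ ∈ F β₁ α, ∀ f₂ ∈ F β₂ α, ∃ γ, β₁ < γ ∧ β₂ < γ ∧ γ < α ∧
        ∃ g ∈ F γ α, (∃ j₁ ∈ F β₁ γ, ∀ x, x < θ β₁ → f₁ x = g (j₁ x)) ∧
          ∃ j₂ ∈ F β₂ γ, ∀ x, x < θ β₂ → f₂ x = g (j₂ x)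
  /-- (P5) `θ α = ⋃ {f[θ β] : β < α, f ∈ F β α}` for `α > 0` -/
  F_cover : ∀ α, α ≤ κ.ord → 0 < α → ∀ τ, τ < θ α →
      ∃ β, β < α ∧ ∃ f ∈ F β α, ∃ ν, ν < θ β ∧ f ν = τ

namespace SimplifiedMorass

variable (M : SimplifiedMorass)

/-- The tree `T = {⟨α,ν⟩ : α ≤ κ, ν < θ α}` of the morass. -/
def InTree (t : Ordinal × Ordinal) : Prop := t.1 ≤ M.κ.ord ∧ t.2 < M.θ t.1

/-- The tree relation: `⟨α,ν⟩ ≺ ⟨β,τ⟩` iff `α < β` and `f ν = τ` for some `f ∈ F α β`. -/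
def Prec (s t : Ordinal × Ordinal) : Prop :=
  M.InTree s ∧ M.InTree t ∧ s.1 < t.1 ∧ ∃ f ∈ M.F s.1 t.1, f s.2 = t.2

end SimplifiedMorass


/-! Call `g₁, g₂` coherent on `θ` if a common value on `Iio θ` is taken only at a common
argument `ν`, below which the two maps agree. Coherence survives composition with
order-preserving maps; it holds for an injective map with itself, and, by (P3), for the two maps
of `F γ (γ + 1)`. Induction on `β` then factors `F α β` through the previous level at
successors (P2) and through one injective map `F γ β` at limits (P4). -/

def CoherentOn {α β : Type*} [LinearOrder α] (θ : α) (g₁ g₂ : α → β) : Prop :=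
  ∀ ν₁ ν₂, ν₁ < θ → ν₂ < θ → g₁ ν₁ = g₂ ν₂ → ν₁ = ν₂ ∧ ∀ x, x < ν₁ → g₁ x = g₂ x

namespace CoherentOn

variable {α β γ : Type*} [LinearOrder α] [LinearOrder β] {θ : α} {θ' : β}

theorem symm {g₁ g₂ : α → γ} (h : CoherentOn θ g₁ g₂) : CoherentOn θ g₂ g₁ := by
  intro ν₁ ν₂ hν₁ hν₂ heq
  obtain ⟨rfl, hagree⟩ := h ν₂ ν₁ hν₂ hν₁ heq.symm
  exact ⟨rfl, fun x hx => (hagree x hx).symm⟩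

theorem congr {f₁ f₂ g₁ g₂ : α → γ} (h : CoherentOn θ g₁ g₂)
    (h₁ : EqOn f₁ g₁ (Iio θ)) (h₂ : EqOn f₂ g₂ (Iio θ)) : CoherentOn θ f₁ f₂ := by
  intro ν₁ ν₂ hν₁ hν₂ heq
  rw [h₁ hν₁, h₂ hν₂] at heq
  obtain ⟨rfl, hagree⟩ := h ν₁ ν₂ hν₁ hν₂ heq
  refine ⟨rfl, fun x hx => ?_⟩
  have hxθ : x < θ := hx.trans hν₁
  rw [h₁ hxθ, h₂ hxθ, hagree x hx]

theorem of_injOn {g : α → γ} (hg : InjOn g (Iio θ)) : CoherentOn θ g g :=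
  fun _ _ hν₁ hν₂ heq => ⟨hg hν₁ hν₂ heq, fun _ _ => rfl⟩

theorem comp {j₁ j₂ : α → β} {g₁ g₂ : β → γ} (hg : CoherentOn θ' g₁ g₂)
    (hj : CoherentOn θ j₁ j₂) (hj₁ : StrictMonoOn j₁ (Iio θ))
    (hmaps₁ : MapsTo j₁ (Iio θ) (Iio θ')) (hmaps₂ : MapsTo j₂ (Iio θ) (Iio θ')) :
    CoherentOn θ (g₁ ∘ j₁) (g₂ ∘ j₂) := by
  intro ν₁ ν₂ hν₁ hν₂ heq
  obtain ⟨hjν, hg_agree⟩ := hg (j₁ ν₁) (j₂ ν₂) (hmaps₁ hν₁) (hmaps₂ hν₂) heq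
  obtain ⟨rfl, hj_agree⟩ := hj ν₁ ν₂ hν₁ hν₂ hjν
  refine ⟨rfl, fun x hx => ?_⟩
  simp only [Function.comp_apply]
  rw [hg_agree (j₁ x) (hj₁ (hx.trans hν₁) hν₁ hx), hj_agree x hx]

/-- A map fixing everything below `δ` and throwing `δ` to `θ` or beyond cannot hit
`Iio θ` from `Ici δ`, so it meets the identity only where both are the identity. -/
theorem id_left {h : α → α} {δ : α} (hδ : δ < θ) (hmono : StrictMonoOn h (Iio θ))
    (hfix : ∀ x, x < δ → h x = x) (hjump : θ ≤ h δ) : CoherentOn θ id h := by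
  intro ν₁ ν₂ hν₁ hν₂ heq
  have hν₂δ : ν₂ < δ := by
    by_contra! hδν₂
    have : h δ ≤ h ν₂ := hmono.monotoneOn hδ hν₂ hδν₂
    exact hν₁.not_ge (hjump.trans (this.trans_eq heq.symm))
  have hν : ν₁ = ν₂ := (heq : ν₁ = h ν₂).trans (hfix ν₂ hν₂δ)
  subst hν
  exact ⟨rfl, fun x hx => (hfix x (hx.trans hν₂δ)).symm⟩

end CoherentOn

namespace SimplifiedMorass

variable (M : SimplifiedMorass)

theorem strictMonoOn_of_mem_F {α β : Ordinal} (hαβ : α < β) (hβ : β ≤ M.κ.ord)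
    {f : Ordinal → Ordinal} (hf : f ∈ M.F α β) : StrictMonoOn f (Iio (M.θ α)) :=
  fun x _ y hy hxy => (M.F_maps α β hαβ hβ f hf).2 x y hxy hy

theorem mapsTo_of_mem_F {α β : Ordinal} (hαβ : α < β) (hβ : β ≤ M.κ.ord)
    {f : Ordinal → Ordinal} (hf : f ∈ M.F α β) : MapsTo f (Iio (M.θ α)) (Iio (M.θ β)) :=
  fun x hx => (M.F_maps α β hαβ hβ f hf).1 x hx

theorem coherentOn_of_mem_F_succ {γ : Ordinal} (hγ : γ < M.κ.ord) {g₁ g₂ : Ordinal → Ordinal}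
    (hg₁ : g₁ ∈ M.F γ (γ + 1)) (hg₂ : g₂ ∈ M.F γ (γ + 1)) : CoherentOn (M.θ γ) g₁ g₂ := by
  have hsucc : γ + 1 ≤ M.κ.ord :=
    ((Cardinal.isSuccLimit_ord M.kappa_unc.le).succ_lt hγ).le
  obtain ⟨-, h, hh, ⟨δ, hδ, hfix, hjump⟩, hcases⟩ := M.F_succ γ hγ
  have hmono := M.strictMonoOn_of_mem_F (lt_add_one γ) hsucc hh
  have hid_h : CoherentOn (M.θ γ) id h := CoherentOn.id_left hδ hmono hfix hjump
  rcases hcases g₁ hg₁ with hg₁ | hg₁ <;> rcases hcases g₂ hg₂ with hg₂ | hg₂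
  · exact (CoherentOn.of_injOn (injOn_id _)).congr hg₁ hg₂
  · exact hid_h.congr hg₁ hg₂
  · exact hid_h.symm.congr hg₁ hg₂
  · exact (CoherentOn.of_injOn hmono.injOn).congr hg₁ hg₂

theorem coherentOn_of_factor {α γ : Ordinal} (hαγ : α < γ) (hγ : γ < M.κ.ord)
    {f₁ f₂ j₁ j₂ g₁ g₂ : Ordinal → Ordinal} (hj₁ : j₁ ∈ M.F α γ) (hj₂ : j₂ ∈ M.F α γ)
    (hj : CoherentOn (M.θ α) j₁ j₂) (hg : CoherentOn (M.θ γ) g₁ g₂)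
    (hf₁ : ∀ x, x < M.θ α → f₁ x = g₁ (j₁ x)) (hf₂ : ∀ x, x < M.θ α → f₂ x = g₂ (j₂ x)) :
    CoherentOn (M.θ α) f₁ f₂ :=
  (hg.comp hj (M.strictMonoOn_of_mem_F hαγ hγ.le hj₁) (M.mapsTo_of_mem_F hαγ hγ.le hj₁)
    (M.mapsTo_of_mem_F hαγ hγ.le hj₂)).congr (fun x hx => hf₁ x hx) (fun x hx => hf₂ x hx)

theorem coherentOn_of_mem_F {α β : Ordinal} (hαβ : α < β) (hβ : β < M.κ.ord)
    {f₁ f₂ : Ordinal → Ordinal} (hf₁ : f₁ ∈ M.F α β) (hf₂ : f₂ ∈ M.F α β) :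
    CoherentOn (M.θ α) f₁ f₂ := by
  induction β using WellFoundedLT.induction generalizing f₁ f₂ with
  | ind β IH =>
    rcases Ordinal.zero_or_succ_or_isSuccLimit β with rfl | ⟨γ, rfl⟩ | hlim
    · exact (not_lt_zero hαβ).elim
    · rw [Order.succ_eq_add_one] at *
      have hγ : γ < M.κ.ord := (lt_add_one γ).trans hβ
      rcases (Order.lt_add_one_iff.mp hαβ).eq_or_lt with rfl | hαγ
      · exact M.coherentOn_of_mem_F_succ hγ hf₁ hf₂
      obtain ⟨g₁, hg₁, j₁, hj₁, hfac₁⟩ :=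
        M.F_comp_factor α γ (γ + 1) hαγ (lt_add_one γ) hβ.le f₁ hf₁
      obtain ⟨g₂, hg₂, j₂, hj₂, hfac₂⟩ :=
        M.F_comp_factor α γ (γ + 1) hαγ (lt_add_one γ) hβ.le f₂ hf₂
      exact M.coherentOn_of_factor hαγ hγ hj₁ hj₂ (IH γ (lt_add_one γ) hαγ hγ hj₁ hj₂)
        (M.coherentOn_of_mem_F_succ hγ hg₁ hg₂) hfac₁ hfac₂
    · obtain ⟨γ, hαγ, -, hγβ, g, hg, ⟨j₁, hj₁, hfac₁⟩, j₂, hj₂, hfac₂⟩ :=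
        M.F_limit β hβ.le hlim α α hαβ hαβ f₁ hf₁ f₂ hf₂
      have hγ : γ < M.κ.ord := hγβ.trans hβ
      exact M.coherentOn_of_factor hαγ hγ hj₁ hj₂ (IH γ hγβ hαγ hγ hj₁ hj₂)
        (CoherentOn.of_injOn (M.strictMonoOn_of_mem_F hγβ hβ.le hg).injOn) hfac₁ hfac₂

end SimplifiedMorass

/-- Lemma 2.1 / Lemma 3.1 of [Irrgang4]: morass maps with a common value agree below it. -/
theorem morass_maps_agree_below (M : SimplifiedMorass) (α β : Ordinal)
    (hαβ : α < β) (hβ : β < M.κ.ord) (τ₁ τ₂ : Ordinal)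
    (hτ₁ : τ₁ < M.θ α) (hτ₂ : τ₂ < M.θ α)
    (f₁ f₂ : Ordinal → Ordinal) (hf₁ : f₁ ∈ M.F α β) (hf₂ : f₂ ∈ M.F α β)
    (heq : f₁ τ₁ = f₂ τ₂) :
    τ₁ = τ₂ ∧ ∀ x, x < τ₁ → f₁ x = f₂ x :=
  M.coherentOn_of_mem_F hαβ hβ hf₁ hf₂ τ₁ τ₂ hτ₁ hτ₂ heq
end
end

section
/- Let a simplified (κ,2)-morass be given. Suppose α < β ≤ κ, f₁, f₂ ∈ F_{αβ}, ζ₁, ζ₂ < θ_α and f₁(ζ₁) = f₂(ζ₂). Then ζ₁ = ζ₂, f₁↾ζ₁ = f₂↾ζ₁, (f₁)_ξ = (f₂)_ξ for all ξ ≤ ζ₁, and (f₁)_{ξη} = (f₂)_{ξη} for all ξ < η ≤ ζ₁. -/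
noncomputable section

open Cardinal Set

/-- The raw data of an embedding between fake gap-1 morasses: an action `base` on the
ordinals `ζ ≤ θ`, order preserving maps `pmap ζ : φ_ζ → φ_{base ζ}`, and maps
`gmap ζ ξ : G ζ ξ → G (base ζ) (base ξ)`. -/
structure PreEmb : Type 1 where
  base : Ordinal.{0} → Ordinal.{0}
  pmap : Ordinal.{0} → Ordinal.{0} → Ordinal.{0}
  gmap : Ordinal.{0} → Ordinal.{0} → (Ordinal.{0} → Ordinal.{0}) → Ordinal.{0} → Ordinal.{0}

/-- Composition of (pre-)embeddings: `(f ∘ g) ζ = f (g ζ)`,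
`(f ∘ g)_ζ = f_{g ζ} ∘ g_ζ`, `(f ∘ g)_{ζξ} = f_{g ζ, g ξ} ∘ g_{ζξ}`. -/
def compPreEmb (f g : PreEmb) : PreEmb where
  base := fun x => f.base (g.base x)
  pmap := fun ζ x => f.pmap (g.base ζ) (g.pmap ζ x)
  gmap := fun ζ ξ b x => f.gmap (g.base ζ) (g.base ξ) (g.gmap ζ ξ b) x

section Emb

variable (φ : Ordinal → Ordinal) (G : Ordinal → Ordinal → Set (Ordinal → Ordinal))
  (δ : Ordinal → Ordinal)

/-- Two pre-embeddings agree (as embeddings of the fake gap-1 morass below `θa`). -/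
def EmbAgree (θa : Ordinal) (f g : PreEmb) : Prop :=
  (∀ ζ, ζ ≤ θa → f.base ζ = g.base ζ) ∧
  (∀ ζ, ζ ≤ θa → ∀ x, x < φ ζ → f.pmap ζ x = g.pmap ζ x) ∧
  (∀ ζ ξ, ζ < ξ → ξ ≤ θa → ∀ b ∈ G ζ ξ, ∀ x, x < φ ζ → f.gmap ζ ξ b x = g.gmap ζ ξ b x)

/-- `f` is an embedding from the fake gap-1 morass `⟨⟨φ_ζ : ζ ≤ θa⟩, ⟨G ζ ξ⟩⟩` to
`⟨⟨φ_ζ : ζ ≤ θb⟩, ⟨G ζ ξ⟩⟩` (where `δ ζ` is the splitting point of `G ζ (ζ+1)`). -/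
def IsEmb (θa θb : Ordinal) (f : PreEmb) : Prop :=
  -- (1) `base` is order preserving `θa + 1 → θb + 1` with `base θa = θb`
  (∀ x y, x < y → y ≤ θa → f.base x < f.base y) ∧ f.base θa = θb ∧
  -- (2) each `pmap ζ` is an order preserving map `φ ζ → φ (base ζ)`
  (∀ ζ, ζ ≤ θa → (∀ x, x < φ ζ → f.pmap ζ x < φ (f.base ζ)) ∧
    ∀ x y, x < y → y < φ ζ → f.pmap ζ x < f.pmap ζ y) ∧
  -- (3) `gmap ζ ξ` maps `G ζ ξ` into `G (base ζ) (base ξ)`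
  (∀ ζ ξ, ζ < ξ → ξ ≤ θa → ∀ b ∈ G ζ ξ, f.gmap ζ ξ b ∈ G (f.base ζ) (f.base ξ)) ∧
  -- (4) splitting points are preserved
  (∀ ζ, ζ < θa → f.pmap ζ (δ ζ) = δ (f.base ζ)) ∧
  -- (5) `f_{ζη} (c ∘ b) = f_{ξη} c ∘ f_{ζξ} b`
  (∀ ζ ξ η, ζ < ξ → ξ < η → η ≤ θa → ∀ b ∈ G ζ ξ, ∀ c ∈ G ξ η, ∀ cb ∈ G ζ η,
    (∀ x, x < φ ζ → cb x = c (b x)) →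
    ∀ x, x < φ ζ → f.gmap ζ η cb x = f.gmap ξ η c (f.gmap ζ ξ b x)) ∧
  -- (6) `f_ξ ∘ b = f_{ζξ} b ∘ f_ζ`
  (∀ ζ ξ, ζ < ξ → ξ ≤ θa → ∀ b ∈ G ζ ξ, ∀ x, x < φ ζ →
    f.pmap ξ (b x) = f.gmap ζ ξ b (f.pmap ζ x))

/-- A left-branching embedding: identity up to `θa`, with `f_{θa} ∈ G θa θb`. -/
def LeftBranching (θa θb : Ordinal) (f : PreEmb) : Prop :=
  IsEmb φ G δ θa θb f ∧
  (∀ ζ, ζ < θa → f.base ζ = ζ) ∧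
  (∀ ζ, ζ < θa → ∀ x, x < φ ζ → f.pmap ζ x = x) ∧
  (∀ ζ ξ, ζ < ξ → ξ < θa → ∀ b ∈ G ζ ξ, ∀ x, x < φ ζ → f.gmap ζ ξ b x = b x) ∧
  (∃ g ∈ G θa θb, ∀ x, x < φ θa → f.pmap θa x = g x) ∧
  (∀ ζ, ζ < θa → ∀ b ∈ G ζ θa, ∀ x, x < φ ζ → f.gmap ζ θa b x = f.pmap θa (b x))

/-- A right-branching embedding with splitting level `η`. -/
def RightBranching (θa θb : Ordinal) (f : PreEmb) : Prop :=
  IsEmb φ G δ θa θb f ∧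
  ∃ η, η < θa ∧
    (∀ x, x < η → f.base x = x) ∧
    (∀ ζ, η + ζ ≤ θa → f.base (η + ζ) = θa + ζ) ∧
    (∀ ζ, ζ < η → ∀ x, x < φ ζ → f.pmap ζ x = x) ∧
    (∀ ζ ξ, ζ < ξ → ξ < η → ∀ b ∈ G ζ ξ, ∀ x, x < φ ζ → f.gmap ζ ξ b x = b x) ∧
    (∃ g ∈ G η θa, ∀ x, x < φ η → f.pmap η x = g x) ∧
    (∀ ζ ξ, η ≤ ζ → ζ < ξ → ξ ≤ θa → ∀ c ∈ G (f.base ζ) (f.base ξ),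
      ∃ b ∈ G ζ ξ, ∀ x, x < φ ζ → f.gmap ζ ξ b x = c x)

end Emb

/-- A simplified `(κ,2)`-morass (Velleman).  It consists of a simplified `(κ⁺,1)`-morass
`gap1 = ⟨⟨φ_ζ : ζ ≤ κ⁺⟩, ⟨G ζ ξ⟩⟩` (with `φ_ζ < κ` for `ζ < κ` and splitting points `δ`),
ordinals `⟨θ_α : α ≤ κ⟩` and families `F α β` of embeddings between the fake gap-1 morasses
below `θ α` and `θ β`. -/
structure Morass2 : Type 2 where
  κ : Cardinal.{0}
  kappa_reg : κ.IsRegular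
  kappa_unc : Cardinal.aleph0 < κ
  gap1 : SimplifiedMorass
  gap1_kappa : gap1.κ = Order.succ κ
  phi_small : ∀ ζ, ζ < κ.ord → gap1.θ ζ < κ.ord
  δ : Ordinal → Ordinal
  delta_lt : ∀ ζ, ζ < (Order.succ κ).ord → δ ζ < gap1.θ ζ
  delta_spec : ∀ ζ, ζ < (Order.succ κ).ord → ∀ b ∈ gap1.F ζ (ζ + 1),
      ¬(∀ x, x < gap1.θ ζ → b x = x) → (∀ x, x < δ ζ → b x = x) ∧ gap1.θ ζ ≤ b (δ ζ)
  θ : Ordinal → Ordinal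
  theta_pos : ∀ α, α < κ.ord → 0 < θ α
  theta_lt : ∀ α, α < κ.ord → θ α < κ.ord
  theta_top : θ κ.ord = (Order.succ κ).ord
  F : Ordinal → Ordinal → Set PreEmb
  /-- members of `F α β` are embeddings -/
  F_emb : ∀ α β, α < β → β ≤ κ.ord → ∀ f ∈ F α β, IsEmb gap1.θ gap1.F δ (θ α) (θ β) f
  /-- (1) `|F α β| < κ` for `α < β < κ` -/
  F_card : ∀ α β, α < β → β < κ.ord → Cardinal.mk (F α β) < Cardinal.lift.{1} κ
  /-- (2) one inclusion of `F α γ = F β γ ∘ F α β` -/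
  F_comp_mem : ∀ α β γ, α < β → β < γ → γ ≤ κ.ord → ∀ f ∈ F β γ, ∀ g ∈ F α β,
      ∃ h ∈ F α γ, EmbAgree gap1.θ gap1.F (θ α) h (compPreEmb f g)
  /-- (2) the other inclusion -/
  F_comp_factor : ∀ α β γ, α < β → β < γ → γ ≤ κ.ord → ∀ h ∈ F α γ,
      ∃ f ∈ F β γ, ∃ g ∈ F α β, EmbAgree gap1.θ gap1.F (θ α) h (compPreEmb f g)
  /-- (3) `F α (α+1)` is an amalgamation: it contains all left-branching embeddings,
  a unique right-branching embedding, and nothing else -/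
  F_amalg : ∀ α, α < κ.ord →
      (∀ f, LeftBranching gap1.θ gap1.F δ (θ α) (θ (α + 1)) f →
        ∃ f' ∈ F α (α + 1), EmbAgree gap1.θ gap1.F (θ α) f f') ∧
      (∃ h ∈ F α (α + 1), RightBranching gap1.θ gap1.F δ (θ α) (θ (α + 1)) h ∧
        ∀ h' ∈ F α (α + 1), RightBranching gap1.θ gap1.F δ (θ α) (θ (α + 1)) h' →
          EmbAgree gap1.θ gap1.F (θ α) h h') ∧
      (∀ f ∈ F α (α + 1), LeftBranching gap1.θ gap1.F δ (θ α) (θ (α + 1)) f ∨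
        RightBranching gap1.θ gap1.F δ (θ α) (θ (α + 1)) f)
  /-- (4) factoring at limit levels -/
  F_limit : ∀ α, α ≤ κ.ord → Order.IsSuccLimit α → ∀ β₁ β₂, β₁ < α → β₂ < α →
      ∀ f₁ ∈ F β₁ α, ∀ f₂ ∈ F β₂ α, ∃ γ, β₁ < γ ∧ β₂ < γ ∧ γ < α ∧
        ∃ g ∈ F γ α, (∃ j₁ ∈ F β₁ γ, EmbAgree gap1.θ gap1.F (θ β₁) f₁ (compPreEmb g j₁)) ∧
          ∃ j₂ ∈ F β₂ γ, EmbAgree gap1.θ gap1.F (θ β₂) f₂ (compPreEmb g j₂)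
  /-- (5)(a) `θ α = ⋃ {f[θ β] : β < α, f ∈ F β α}` at limits -/
  F_cover_theta : ∀ α, α ≤ κ.ord → Order.IsSuccLimit α → ∀ τ, τ < θ α →
      ∃ β, β < α ∧ ∃ f ∈ F β α, ∃ ν, ν < θ β ∧ f.base ν = τ
  /-- (5)(b) `φ ζ = ⋃ {f_ζ̄ [φ ζ̄] : f ∈ F β α, f ζ̄ = ζ}` at limits -/
  F_cover_phi : ∀ α, α ≤ κ.ord → Order.IsSuccLimit α → ∀ ζ, ζ ≤ θ α → ∀ τ, τ < gap1.θ ζ →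
      ∃ β, β < α ∧ ∃ f ∈ F β α, ∃ ζ', ζ' ≤ θ β ∧ f.base ζ' = ζ ∧
        ∃ x, x < gap1.θ ζ' ∧ f.pmap ζ' x = τ
  /-- (5)(c) `G ζ ξ = ⋃ {f_{ζ̄ξ̄} [G ζ̄ ξ̄] : f ∈ F β α, f ζ̄ = ζ, f ξ̄ = ξ}` at limits -/
  F_cover_G : ∀ α, α ≤ κ.ord → Order.IsSuccLimit α → ∀ ζ ξ, ζ < ξ → ξ ≤ θ α → ∀ b ∈ gap1.F ζ ξ,
      ∃ β, β < α ∧ ∃ f ∈ F β α, ∃ ζ' ξ', ζ' < ξ' ∧ ξ' ≤ θ β ∧ f.base ζ' = ζ ∧ f.base ξ' = ξ ∧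
        ∃ c ∈ gap1.F ζ' ξ', ∀ x, x < gap1.θ ζ' → f.gmap ζ' ξ' c x = b x


/-!
Call two maps coherent below `θ` if a common value at two points below `θ` forces the points to
coincide and the maps to agree up to them. Coherence survives composition and pointwise
agreement, and every injective map is coherent with itself. The maps in `F γ (γ + 1)` are
coherent: each is the identity below `θ γ` or agrees with the one right-branching map, which is
the identity below its splitting level and sends everything above it to `θ γ` or beyond. By
induction on `β`, factoring through `F γ (γ + 1)` at successors and using the limit factoring
property at limits, any two maps in `F α β` are coherent, as maps of levels together with their
point maps `f_ξ`. The same induction shows the gap-1 maps in `G` are coherent, and the maps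
`f_{ξη}` then agree by naturality.
-/

theorem StrictMonoOn.le_apply_of_isLowerSet {X : Type*} [LinearOrder X] [WellFoundedLT X]
    {f : X → X} {s : Set X} (hf : StrictMonoOn f s) (hs : IsLowerSet s) {x : X} (hx : x ∈ s) :
    x ≤ f x := by
  induction x using WellFoundedLT.induction with
  | _ x ih =>
    by_contra! hlt
    have hfx : f x ∈ s := hs hlt.le hx
    exact (hf hfx hx hlt).not_ge (ih _ hlt hfx)

section CoherentBelow

variable {X : Type*} [LinearOrder X] {θ θ' δ : X} {b c b' c' : X → X}

def CoherentBelow (θ : X) (b c : X → X) : Prop :=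
  ∀ ν₁ < θ, ∀ ν₂ < θ, b ν₁ = c ν₂ → ν₁ = ν₂ ∧ EqOn b c (Iic ν₁)

theorem CoherentBelow.symm (h : CoherentBelow θ b c) : CoherentBelow θ c b := by
  intro ν₁ hν₁ ν₂ hν₂ he
  obtain ⟨rfl, hbc⟩ := h ν₂ hν₂ ν₁ hν₁ he.symm
  exact ⟨rfl, hbc.symm⟩

theorem CoherentBelow.congr (hb : EqOn b b' (Iio θ)) (hc : EqOn c c' (Iio θ))
    (h : CoherentBelow θ b' c') : CoherentBelow θ b c := by
  intro ν₁ hν₁ ν₂ hν₂ he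
  rw [hb hν₁, hc hν₂] at he
  obtain ⟨rfl, hbc⟩ := h ν₁ hν₁ ν₂ hν₂ he
  refine ⟨rfl, fun x hx => ?_⟩
  have hxθ : x < θ := lt_of_le_of_lt hx hν₁
  rw [hb hxθ, hc hxθ, hbc hx]

theorem coherentBelow_self (hb : InjOn b (Iio θ)) : CoherentBelow θ b b :=
  fun _ hν₁ _ hν₂ he => ⟨hb hν₁ hν₂ he, eqOn_refl _ _⟩

/-- The two shapes of maps in `F γ (γ + 1)`: the identity, and a map that is the identity up
to the splitting point `δ` and jumps to `θ` or beyond from there on. -/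
theorem coherentBelow_of_eqOn_id (hb : EqOn b id (Iio θ)) (hc : EqOn c id (Iio δ))
    (hcθ : ∀ ν, δ ≤ ν → ν < θ → θ ≤ c ν) : CoherentBelow θ b c := by
  intro ν₁ hν₁ ν₂ hν₂ he
  replace he : ν₁ = c ν₂ := (hb hν₁).symm.trans he
  obtain hνδ | hδν := lt_or_ge ν₂ δ
  · replace he : ν₁ = ν₂ := he.trans (hc hνδ)
    subst he
    exact ⟨rfl, fun x hx => by
      rw [hb (lt_of_le_of_lt hx hν₁), hc (lt_of_le_of_lt hx hνδ)]⟩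
  · exact absurd hν₁ (not_lt.mpr (he ▸ hcθ ν₂ hδν hν₂))

theorem CoherentBelow.comp {h₁ h₂ g₁ g₂ : X → X} (hh : CoherentBelow θ' h₁ h₂)
    (hg : CoherentBelow θ g₁ g₂) (hg₁ : MapsTo g₁ (Iio θ) (Iio θ'))
    (hg₂ : MapsTo g₂ (Iio θ) (Iio θ')) (hmono : MonotoneOn g₁ (Iio θ)) :
    CoherentBelow θ (h₁ ∘ g₁) (h₂ ∘ g₂) := by
  intro ν₁ hν₁ ν₂ hν₂ he
  obtain ⟨hgν, hh₁₂⟩ := hh (g₁ ν₁) (hg₁ hν₁) (g₂ ν₂) (hg₂ hν₂) he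
  obtain ⟨rfl, hg₁₂⟩ := hg ν₁ hν₁ ν₂ hν₂ hgν
  refine ⟨rfl, fun x hx => ?_⟩
  have hxθ : x < θ := lt_of_le_of_lt hx hν₁
  simp only [Function.comp_apply]
  rw [← hg₁₂ hx, hh₁₂ (hmono hxθ hν₁ hx)]

end CoherentBelow

namespace SimplifiedMorass

variable (S : SimplifiedMorass)

theorem strictMonoOn_of_mem {α β : Ordinal} (hαβ : α < β) (hβ : β ≤ S.κ.ord)
    {b : Ordinal → Ordinal} (hb : b ∈ S.F α β) : StrictMonoOn b (Iio (S.θ α)) :=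
  fun x _ y hy hxy => (S.F_maps α β hαβ hβ b hb).2 x y hxy hy

theorem mapsTo_of_mem {α β : Ordinal} (hαβ : α < β) (hβ : β ≤ S.κ.ord)
    {b : Ordinal → Ordinal} (hb : b ∈ S.F α β) : MapsTo b (Iio (S.θ α)) (Iio (S.θ β)) :=
  fun x hx => (S.F_maps α β hαβ hβ b hb).1 x hx

theorem coherentBelow_succ {γ : Ordinal} (hγ : γ < S.κ.ord) {b c : Ordinal → Ordinal}
    (hb : b ∈ S.F γ (γ + 1)) (hc : c ∈ S.F γ (γ + 1)) : CoherentBelow (S.θ γ) b c := by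
  obtain ⟨-, h, hh, ⟨δ, hδθ, hδ, hθδ⟩, hcases⟩ := S.F_succ γ hγ
  have hmono := S.strictMonoOn_of_mem (lt_add_one γ) (Order.add_one_le_iff.mpr hγ) hh
  have hid_h : CoherentBelow (S.θ γ) id h :=
    coherentBelow_of_eqOn_id (eqOn_refl _ _) (fun x hx => hδ x hx) fun ν hδν hν =>
      hθδ.trans (hmono.monotoneOn hδθ hν hδν)
  have hh_h : CoherentBelow (S.θ γ) h h := coherentBelow_self hmono.injOn
  rcases hcases b hb with hb | hb <;> rcases hcases c hc with hc | hc
  · exact (coherentBelow_self (injOn_id _)).congr (fun x hx => hb x hx) fun x hx => hc x hx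
  · exact hid_h.congr (fun x hx => hb x hx) fun x hx => hc x hx
  · exact hid_h.symm.congr (fun x hx => hb x hx) fun x hx => hc x hx
  · exact hh_h.congr (fun x hx => hb x hx) fun x hx => hc x hx

theorem coherentBelow {α β : Ordinal} (hαβ : α < β) (hβ : β ≤ S.κ.ord)
    {b c : Ordinal → Ordinal} (hb : b ∈ S.F α β) (hc : c ∈ S.F α β) :
    CoherentBelow (S.θ α) b c := by
  induction β using Ordinal.limitRecOn generalizing b c with
  | zero => exact absurd hαβ not_lt_zero
  | add_one γ ih =>
    have hγ : γ < S.κ.ord := (lt_add_one γ).trans_le hβ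
    obtain hαγ | rfl := (Order.lt_add_one_iff.mp hαβ).lt_or_eq
    · obtain ⟨b₂, hb₂, b₁, hb₁, hb⟩ := S.F_comp_factor α γ (γ + 1) hαγ (lt_add_one γ) hβ b hb
      obtain ⟨c₂, hc₂, c₁, hc₁, hc⟩ := S.F_comp_factor α γ (γ + 1) hαγ (lt_add_one γ) hβ c hc
      refine CoherentBelow.congr (fun x hx => hb x hx) (fun x hx => hc x hx) ?_
      exact (S.coherentBelow_succ hγ hb₂ hc₂).comp (ih hαγ hγ.le hb₁ hc₁)
        (S.mapsTo_of_mem hαγ hγ.le hb₁) (S.mapsTo_of_mem hαγ hγ.le hc₁)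
        (S.strictMonoOn_of_mem hαγ hγ.le hb₁).monotoneOn
    · exact S.coherentBelow_succ hγ hb hc
  | limit β hlim ih =>
    obtain ⟨γ, hαγ, -, hγβ, g, hg, ⟨j₁, hj₁, hb⟩, ⟨j₂, hj₂, hc⟩⟩ :=
      S.F_limit β hβ hlim α α hαβ hαβ b hb c hc
    have hγ : γ ≤ S.κ.ord := hγβ.le.trans hβ
    refine CoherentBelow.congr (fun x hx => hb x hx) (fun x hx => hc x hx) ?_
    exact (coherentBelow_self (S.strictMonoOn_of_mem hγβ hβ hg).injOn).comp
      (ih γ hγβ hαγ hγ hj₁ hj₂) (S.mapsTo_of_mem hαγ hγ hj₁) (S.mapsTo_of_mem hαγ hγ hj₂)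
      (S.strictMonoOn_of_mem hαγ hγ hj₁).monotoneOn

end SimplifiedMorass

section IsEmb

variable {φ : Ordinal → Ordinal} {G : Ordinal → Ordinal → Set (Ordinal → Ordinal)}
  {δ : Ordinal → Ordinal} {θ θ' ζ ξ η : Ordinal} {f : PreEmb}

theorem IsEmb.base_strictMonoOn (hf : IsEmb φ G δ θ θ' f) : StrictMonoOn f.base (Iic θ) :=
  fun x _ y hy hxy => hf.1 x y hxy hy

theorem IsEmb.base_lt (hf : IsEmb φ G δ θ θ' f) (hζ : ζ < θ) : f.base ζ < θ' :=
  hf.2.1 ▸ hf.1 ζ θ hζ le_rfl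

theorem IsEmb.base_le (hf : IsEmb φ G δ θ θ' f) (hζ : ζ ≤ θ) : f.base ζ ≤ θ' :=
  hf.2.1 ▸ hf.base_strictMonoOn.monotoneOn hζ (mem_Iic.2 le_rfl) hζ

theorem IsEmb.le (hf : IsEmb φ G δ θ θ' f) : θ ≤ θ' :=
  hf.2.1 ▸ hf.base_strictMonoOn.le_apply_of_isLowerSet (isLowerSet_Iic _) (mem_Iic.2 le_rfl)

theorem IsEmb.pmap_lt (hf : IsEmb φ G δ θ θ' f) (hζ : ζ ≤ θ) {x : Ordinal} (hx : x < φ ζ) :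
    f.pmap ζ x < φ (f.base ζ) :=
  (hf.2.2.1 ζ hζ).1 x hx

theorem IsEmb.pmap_strictMonoOn (hf : IsEmb φ G δ θ θ' f) (hζ : ζ ≤ θ) :
    StrictMonoOn (f.pmap ζ) (Iio (φ ζ)) :=
  fun x _ y hy hxy => (hf.2.2.1 ζ hζ).2 x y hxy hy

theorem IsEmb.gmap_mem (hf : IsEmb φ G δ θ θ' f) (hξη : ξ < η) (hη : η ≤ θ)
    {b : Ordinal → Ordinal} (hb : b ∈ G ξ η) : f.gmap ξ η b ∈ G (f.base ξ) (f.base η) :=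
  hf.2.2.2.1 ξ η hξη hη b hb

theorem IsEmb.pmap_apply (hf : IsEmb φ G δ θ θ' f) (hξη : ξ < η) (hη : η ≤ θ)
    {b : Ordinal → Ordinal} (hb : b ∈ G ξ η) {x : Ordinal} (hx : x < φ ξ) :
    f.pmap η (b x) = f.gmap ξ η b (f.pmap ξ x) :=
  hf.2.2.2.2.2.2 ξ η hξη hη b hb x hx

end IsEmb

namespace PreEmb

variable (φ : Ordinal → Ordinal)

def AgreeUpTo (ζ : Ordinal) (f g : PreEmb) : Prop :=
  (∀ ξ, ξ ≤ ζ → f.base ξ = g.base ξ) ∧ ∀ ξ, ξ ≤ ζ → ∀ x, x < φ ξ → f.pmap ξ x = g.pmap ξ x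

def CoherentBelow (θ : Ordinal) (f g : PreEmb) : Prop :=
  ∀ ζ₁ < θ, ∀ ζ₂ < θ, f.base ζ₁ = g.base ζ₂ → ζ₁ = ζ₂ ∧ AgreeUpTo φ ζ₁ f g

variable {φ} {G : Ordinal → Ordinal → Set (Ordinal → Ordinal)} {δ : Ordinal → Ordinal}
  {ζ θ θ' : Ordinal} {f g h f₁ f₂ f₁' f₂' : PreEmb}

theorem AgreeUpTo.symm (h : AgreeUpTo φ ζ f g) : AgreeUpTo φ ζ g f :=
  ⟨fun ξ hξ => (h.1 ξ hξ).symm, fun ξ hξ x hx => (h.2 ξ hξ x hx).symm⟩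

theorem AgreeUpTo.trans (h₁ : AgreeUpTo φ ζ f g) (h₂ : AgreeUpTo φ ζ g h) : AgreeUpTo φ ζ f h :=
  ⟨fun ξ hξ => (h₁.1 ξ hξ).trans (h₂.1 ξ hξ),
    fun ξ hξ x hx => (h₁.2 ξ hξ x hx).trans (h₂.2 ξ hξ x hx)⟩

theorem _root_.EmbAgree.agreeUpTo (h : EmbAgree φ G θ f g) (hζ : ζ ≤ θ) : AgreeUpTo φ ζ f g :=
  ⟨fun ξ hξ => h.1 ξ (hξ.trans hζ), fun ξ hξ => h.2.1 ξ (hξ.trans hζ)⟩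

theorem CoherentBelow.symm (h : CoherentBelow φ θ f g) : CoherentBelow φ θ g f := by
  intro ζ₁ hζ₁ ζ₂ hζ₂ he
  obtain ⟨rfl, hfg⟩ := h ζ₂ hζ₂ ζ₁ hζ₁ he.symm
  exact ⟨rfl, hfg.symm⟩

theorem CoherentBelow.congr (h₁ : ∀ ζ < θ, AgreeUpTo φ ζ f₁ f₁')
    (h₂ : ∀ ζ < θ, AgreeUpTo φ ζ f₂ f₂') (h : CoherentBelow φ θ f₁' f₂') :
    CoherentBelow φ θ f₁ f₂ := by
  intro ζ₁ hζ₁ ζ₂ hζ₂ he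
  rw [(h₁ ζ₁ hζ₁).1 ζ₁ le_rfl, (h₂ ζ₂ hζ₂).1 ζ₂ le_rfl] at he
  obtain ⟨rfl, hag⟩ := h ζ₁ hζ₁ ζ₂ hζ₂ he
  exact ⟨rfl, ((h₁ ζ₁ hζ₁).trans hag).trans (h₂ ζ₁ hζ₁).symm⟩

theorem coherentBelow_self (hf : InjOn f.base (Iio θ)) : CoherentBelow φ θ f f :=
  fun _ hζ₁ _ hζ₂ he => ⟨hf hζ₁ hζ₂ he, ⟨fun _ _ => rfl, fun _ _ _ _ => rfl⟩⟩

theorem coherentBelow_of_eq_id {η : Ordinal} (h₁b : ∀ ξ < θ, f₁.base ξ = ξ)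
    (h₁p : ∀ ξ < θ, ∀ x < φ ξ, f₁.pmap ξ x = x) (h₂b : ∀ ξ < η, f₂.base ξ = ξ)
    (h₂p : ∀ ξ < η, ∀ x < φ ξ, f₂.pmap ξ x = x) (h₂θ : ∀ ξ, η ≤ ξ → ξ < θ → θ ≤ f₂.base ξ) :
    CoherentBelow φ θ f₁ f₂ := by
  intro ζ₁ hζ₁ ζ₂ hζ₂ he
  rw [h₁b ζ₁ hζ₁] at he
  obtain hζη | hηζ := lt_or_ge ζ₂ η
  · rw [h₂b ζ₂ hζη] at he
    subst he
    refine ⟨rfl, fun ξ hξ => ?_, fun ξ hξ x hx => ?_⟩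
    · rw [h₁b ξ (lt_of_le_of_lt hξ hζ₁), h₂b ξ (lt_of_le_of_lt hξ hζη)]
    · rw [h₁p ξ (lt_of_le_of_lt hξ hζ₁) x hx, h₂p ξ (lt_of_le_of_lt hξ hζη) x hx]
  · exact absurd hζ₁ (not_lt.mpr (he ▸ h₂θ ζ₂ hηζ hζ₂))

theorem CoherentBelow.comp {h₁ h₂ g₁ g₂ : PreEmb} (hh : CoherentBelow φ θ' h₁ h₂)
    (hg : CoherentBelow φ θ g₁ g₂) (hg₁ : IsEmb φ G δ θ θ' g₁) (hg₂ : IsEmb φ G δ θ θ' g₂) :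
    CoherentBelow φ θ (compPreEmb h₁ g₁) (compPreEmb h₂ g₂) := by
  intro ζ₁ hζ₁ ζ₂ hζ₂ he
  obtain ⟨hgζ, hh₁₂⟩ := hh _ (hg₁.base_lt hζ₁) _ (hg₂.base_lt hζ₂) he
  obtain ⟨rfl, hg₁₂⟩ := hg ζ₁ hζ₁ ζ₂ hζ₂ hgζ
  have hmono : ∀ ξ ≤ ζ₁, g₁.base ξ ≤ g₁.base ζ₁ := fun ξ hξ =>
    hg₁.base_strictMonoOn.monotoneOn (hξ.trans hζ₁.le) hζ₁.le hξ
  refine ⟨rfl, fun ξ hξ => ?_, fun ξ hξ x hx => ?_⟩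
  · change h₁.base (g₁.base ξ) = h₂.base (g₂.base ξ)
    rw [← hg₁₂.1 ξ hξ, hh₁₂.1 _ (hmono ξ hξ)]
  · change h₁.pmap (g₁.base ξ) (g₁.pmap ξ x) = h₂.pmap (g₂.base ξ) (g₂.pmap ξ x)
    rw [hh₁₂.2 _ (hmono ξ hξ) _ (hg₁.pmap_lt (hξ.trans hζ₁.le) hx), hg₁₂.1 ξ hξ,
      hg₁₂.2 ξ hξ x hx]

end PreEmb

/-- The maps `(fᵢ)_{ξη}(b)` lie in the same `G` and agree at `(f₁)_ξ x ≥ x`, by naturality;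
coherence of the gap-1 morass propagates this down to `x`. -/
theorem PreEmb.AgreeUpTo.embAgree (S : SimplifiedMorass) {δ : Ordinal → Ordinal}
    {θa θb ζ : Ordinal} {f₁ f₂ : PreEmb} (hθb : θb ≤ S.κ.ord)
    (hf₁ : IsEmb S.θ S.F δ θa θb f₁) (hf₂ : IsEmb S.θ S.F δ θa θb f₂) (hζ : ζ ≤ θa)
    (hag : PreEmb.AgreeUpTo S.θ ζ f₁ f₂) : EmbAgree S.θ S.F ζ f₁ f₂ := by
  refine ⟨hag.1, hag.2, fun ξ η hξη hη b hb x hx => ?_⟩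
  have hηa : η ≤ θa := hη.trans hζ
  have hξa : ξ ≤ θa := hξη.le.trans hηa
  have hd₁ := hf₁.gmap_mem hξη hηa hb
  have hd₂ := hf₂.gmap_mem hξη hηa hb
  rw [← hag.1 ξ (hξη.le.trans hη), ← hag.1 η hη] at hd₂
  have hbx : b x < S.θ η := (S.F_maps ξ η hξη (hηa.trans (hf₁.le.trans hθb)) b hb).1 x hx
  have hp := hf₁.pmap_lt hξa hx
  have hnat : f₁.gmap ξ η b (f₁.pmap ξ x) = f₂.gmap ξ η b (f₁.pmap ξ x) := by
    rw [← hf₁.pmap_apply hξη hηa hb hx, hag.2 ξ (hξη.le.trans hη) x hx, hag.2 η hη _ hbx,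
      hf₂.pmap_apply hξη hηa hb hx]
  exact (S.coherentBelow (hf₁.1 ξ η hξη hηa) ((hf₁.base_le hηa).trans hθb) hd₁ hd₂ _ hp _ hp
    hnat).2 ((hf₁.pmap_strictMonoOn hξa).le_apply_of_isLowerSet (isLowerSet_Iio _) hx)

namespace Morass2

variable (M : Morass2)

theorem theta_le_gap1_kappa {β : Ordinal} (hβ : β ≤ M.κ.ord) : M.θ β ≤ M.gap1.κ.ord := by
  rw [M.gap1_kappa]
  rcases hβ.lt_or_eq with h | rfl
  · exact (M.theta_lt β h).le.trans (Cardinal.ord_le_ord.mpr (Order.le_succ _))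
  · rw [M.theta_top]

def Coherent (α β : Ordinal) : Prop :=
  ∀ f₁ ∈ M.F α β, ∀ f₂ ∈ M.F α β, PreEmb.CoherentBelow M.gap1.θ (M.θ α) f₁ f₂

theorem coherent_succ {γ : Ordinal} (hγ : γ < M.κ.ord) : M.Coherent γ (γ + 1) := by
  obtain ⟨-, ⟨h, -, hhR, huniq⟩, hcases⟩ := M.F_amalg γ hγ
  have left_coherent : ∀ {f₁ f₂ : PreEmb},
      LeftBranching M.gap1.θ M.gap1.F M.δ (M.θ γ) (M.θ (γ + 1)) f₁ → f₂ ∈ M.F γ (γ + 1) →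
        PreEmb.CoherentBelow M.gap1.θ (M.θ γ) f₁ f₂ := by
    rintro f₁ f₂ ⟨-, h₁b, h₁p, -⟩ hf₂
    rcases hcases f₂ hf₂ with ⟨-, h₂b, h₂p, -⟩ | ⟨-, η, -, h₂b, h₂shift, h₂p, -⟩
    · exact PreEmb.coherentBelow_of_eq_id h₁b h₁p h₂b h₂p fun ξ hθξ hξ =>
        absurd hξ (not_lt.2 hθξ)
    · refine PreEmb.coherentBelow_of_eq_id h₁b h₁p h₂b h₂p fun ξ hηξ hξ => ?_
      obtain ⟨τ, rfl⟩ := exists_add_of_le hηξ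
      exact (h₂shift τ hξ.le).symm ▸ le_self_add
  intro f₁ hf₁ f₂ hf₂
  rcases hcases f₁ hf₁ with hL₁ | hR₁
  · exact left_coherent hL₁ hf₂
  rcases hcases f₂ hf₂ with hL₂ | hR₂
  · exact (left_coherent hL₂ hf₁).symm
  · have hh_coh : PreEmb.CoherentBelow M.gap1.θ (M.θ γ) h h := PreEmb.coherentBelow_self
      (hhR.1.base_strictMonoOn.injOn.mono Iio_subset_Iic_self)
    exact hh_coh.congr (fun ζ hζ => ((huniq f₁ hf₁ hR₁).agreeUpTo hζ.le).symm)
      (fun ζ hζ => ((huniq f₂ hf₂ hR₂).agreeUpTo hζ.le).symm)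

theorem coherent_trans {α γ β : Ordinal} (hαγ : α < γ) (hγβ : γ < β) (hβ : β ≤ M.κ.ord)
    (hαγ_coh : M.Coherent α γ) (hγβ_coh : M.Coherent γ β) : M.Coherent α β := by
  intro f₁ hf₁ f₂ hf₂
  have hγ : γ ≤ M.κ.ord := hγβ.le.trans hβ
  obtain ⟨h₁, hh₁, g₁, hg₁, hf₁g⟩ := M.F_comp_factor α γ β hαγ hγβ hβ f₁ hf₁
  obtain ⟨h₂, hh₂, g₂, hg₂, hf₂g⟩ := M.F_comp_factor α γ β hαγ hγβ hβ f₂ hf₂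
  exact ((hγβ_coh h₁ hh₁ h₂ hh₂).comp (hαγ_coh g₁ hg₁ g₂ hg₂) (M.F_emb α γ hαγ hγ g₁ hg₁)
    (M.F_emb α γ hαγ hγ g₂ hg₂)).congr (fun ζ hζ => hf₁g.agreeUpTo hζ.le)
    (fun ζ hζ => hf₂g.agreeUpTo hζ.le)

theorem coherent_of_isSuccLimit {α β : Ordinal} (hβ : β ≤ M.κ.ord)
    (hlim : Order.IsSuccLimit β) (hαβ : α < β) (ih : ∀ γ, α < γ → γ < β → M.Coherent α γ) :
    M.Coherent α β := by
  intro f₁ hf₁ f₂ hf₂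
  obtain ⟨γ, hαγ, -, hγβ, g, hg, ⟨j₁, hj₁, hf₁j⟩, ⟨j₂, hj₂, hf₂j⟩⟩ :=
    M.F_limit β hβ hlim α α hαβ hαβ f₁ hf₁ f₂ hf₂
  have hγ : γ ≤ M.κ.ord := hγβ.le.trans hβ
  have hg_coh : PreEmb.CoherentBelow M.gap1.θ (M.θ γ) g g := PreEmb.coherentBelow_self
    ((M.F_emb γ β hγβ hβ g hg).base_strictMonoOn.injOn.mono Iio_subset_Iic_self)
  exact (hg_coh.comp (ih γ hαγ hγβ j₁ hj₁ j₂ hj₂) (M.F_emb α γ hαγ hγ j₁ hj₁)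
    (M.F_emb α γ hαγ hγ j₂ hj₂)).congr (fun ζ hζ => hf₁j.agreeUpTo hζ.le)
    (fun ζ hζ => hf₂j.agreeUpTo hζ.le)

theorem coherent {α β : Ordinal} (hαβ : α < β) (hβ : β ≤ M.κ.ord) : M.Coherent α β := by
  induction β using Ordinal.limitRecOn with
  | zero => exact absurd hαβ not_lt_zero
  | add_one γ ih =>
    have hγ : γ < M.κ.ord := (lt_add_one γ).trans_le hβ
    obtain hαγ | rfl := (Order.lt_add_one_iff.mp hαβ).lt_or_eq
    · exact M.coherent_trans hαγ (lt_add_one γ) hβ (ih hαγ hγ.le) (M.coherent_succ hγ)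
    · exact M.coherent_succ hγ
  | limit β hlim ih =>
    exact M.coherent_of_isSuccLimit hβ hlim hαβ fun γ hαγ hγβ => ih γ hγβ hαγ (hγβ.le.trans hβ)

end Morass2

/-- Velleman's lemma 2.2 (Lemma 2.4 of the paper): if `f₁, f₂ ∈ F α β` and
`f₁ ζ₁ = f₂ ζ₂` for some `ζ₁, ζ₂ < θ α`, then `ζ₁ = ζ₂`, `f₁ ↾ ζ₁ = f₂ ↾ ζ₁`,
`(f₁)_ξ = (f₂)_ξ` for all `ξ ≤ ζ₁` and `(f₁)_{ξη} = (f₂)_{ξη}` for all `ξ < η ≤ ζ₁`. -/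
theorem morass2_embeddings_agree_below (M : Morass2) (α β : Ordinal)
    (hαβ : α < β) (hβ : β ≤ M.κ.ord) (f₁ f₂ : PreEmb)
    (hf₁ : f₁ ∈ M.F α β) (hf₂ : f₂ ∈ M.F α β) (ζ₁ ζ₂ : Ordinal)
    (hζ₁ : ζ₁ < M.θ α) (hζ₂ : ζ₂ < M.θ α) (heq : f₁.base ζ₁ = f₂.base ζ₂) :
    ζ₁ = ζ₂ ∧
    (∀ x, x < ζ₁ → f₁.base x = f₂.base x) ∧
    (∀ ξ, ξ ≤ ζ₁ → ∀ x, x < M.gap1.θ ξ → f₁.pmap ξ x = f₂.pmap ξ x) ∧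
    (∀ ξ η, ξ < η → η ≤ ζ₁ → ∀ b ∈ M.gap1.F ξ η, ∀ x, x < M.gap1.θ ξ →
      f₁.gmap ξ η b x = f₂.gmap ξ η b x) := by
  obtain ⟨rfl, hag⟩ := M.coherent hαβ hβ f₁ hf₁ f₂ hf₂ ζ₁ hζ₁ ζ₂ hζ₂ heq
  have hemb : EmbAgree M.gap1.θ M.gap1.F ζ₁ f₁ f₂ :=
    hag.embAgree M.gap1 (M.theta_le_gap1_kappa hβ) (M.F_emb α β hαβ hβ f₁ hf₁)
      (M.F_emb α β hαβ hβ f₂ hf₂) hζ₁.le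
  exact ⟨rfl, fun x hx => hemb.1 x hx.le, hemb.2.1, hemb.2.2⟩
end
end

section
/- In the partial order P, the family {p_β : β < ω₁}, where p_β : {0,1} × {β} → 2 is the condition with p_β(0,β) = 1 and p_β(1,β) = 0, is an antichain of cardinality ω₁; in particular, P does not satisfy the countable chain condition. -/
noncomputable section

open Cardinal Set

/-! ### The forcing `P` of finite partial functions `a_p × b_p → 2`, `a_p × b_p ⊆ ω₂ × ω₁` -/

/-- Conditions are coded as sets of pairs `⟨⟨α,β⟩,ε⟩` (the graph of the function). -/
abbrev CondR : Type 1 := Set ((Ordinal × Ordinal) × Bool)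

/-- `a_p`, the set of first coordinates of the domain. -/
def asetR (p : CondR) : Set Ordinal := {α | ∃ β b, ((α, β), b) ∈ p}

/-- `b_p`, the set of second coordinates of the domain. -/
def bsetR (p : CondR) : Set Ordinal := {β | ∃ α b, ((α, β), b) ∈ p}

/-- `p ∈ P`: a finite function `a_p × b_p → 2` with `a_p × b_p ⊆ ω₂ × ω₁`. -/
def IsCondR (p : CondR) : Prop :=
  p.Finite ∧ (∀ x b b', (x, b) ∈ p → (x, b') ∈ p → b = b') ∧
  (∀ α ∈ asetR p, ∀ β ∈ bsetR p, ∃ b, ((α, β), b) ∈ p) ∧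
  (∀ z ∈ p, z.1.1 < (Cardinal.aleph 2).ord ∧ z.1.2 < (Cardinal.aleph 1).ord)

/-- `p ≤ q` iff `q ⊆ p` and `p (α₁, β) ≤ p (α₂, β)` for all `α₁ < α₂ ∈ a_q` and all
`β ∈ b_p - b_q`. -/
def leR (p q : CondR) : Prop :=
  q ⊆ p ∧ ∀ α₁ α₂ β b₁ b₂, α₁ ∈ asetR q → α₂ ∈ asetR q → α₁ < α₂ →
    β ∈ bsetR p → β ∉ bsetR q → ((α₁, β), b₁) ∈ p → ((α₂, β), b₂) ∈ p → b₁ ≤ b₂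

/-- `p ↾ (a × b)`. -/
def restrictR (p : CondR) (a b : Ordinal) : CondR := {z ∈ p | z.1.1 < a ∧ z.1.2 < b}

/-- The action `p ↦ π [p]` of an order preserving map `π` (acting on the first
coordinates) on conditions. -/
def mapCondR (f : Ordinal → Ordinal) (p : CondR) : CondR :=
  (fun z => ((f z.1.1, z.1.2), z.2)) '' p

/-- `h⁻¹ [p] ↾ (a × b)`. -/
def invCondR (f : Ordinal → Ordinal) (a b : Ordinal) (p : CondR) : CondR :=
  {z | z.1.1 < a ∧ z.1.2 < b ∧ ((f z.1.1, z.1.2), z.2) ∈ p}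


/-- The conditions `p_β : {0,1} × {β} → 2` with `p_β (0,β) = 1` and `p_β (1,β) = 0`. -/
def pB (β : Ordinal) : CondR :=
  {(((0 : Ordinal), β), true), (((1 : Ordinal), β), false)}

lemma mem_pB {β : Ordinal} {z : (Ordinal × Ordinal) × Bool} :
    z ∈ pB β ↔ z = ((0, β), true) ∨ z = ((1, β), false) := by
  simp [pB]

lemma asetR_pB (β : Ordinal) : asetR (pB β) = {0, 1} := by
  ext α
  simp only [asetR, mem_ofPred_eq, mem_pB, Prod.mk.injEq, mem_insert_iff, mem_singleton_iff]
  constructor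
  · rintro ⟨β', b, h | h⟩ <;> simp_all
  · rintro (rfl | rfl)
    · exact ⟨β, true, by simp⟩
    · exact ⟨β, false, by simp⟩

lemma bsetR_pB (β : Ordinal) : bsetR (pB β) = {β} := by
  ext β'
  simp only [bsetR, mem_ofPred_eq, mem_pB, Prod.mk.injEq, mem_singleton_iff]
  constructor
  · rintro ⟨α, b, h | h⟩ <;> simp_all
  · rintro rfl
    exact ⟨0, true, by simp⟩

lemma pB_injective : Function.Injective pB := by
  intro β β' h
  have : (((0 : Ordinal), β), true) ∈ pB β' := h ▸ mem_pB.mpr (Or.inl rfl)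
  simpa [mem_pB] using this

lemma isCondR_pB {β : Ordinal} (hβ : β < (aleph 1).ord) : IsCondR (pB β) := by
  have one_lt : (1 : Ordinal) < (aleph 2).ord :=
    lt_ord.2 <| by simpa using one_lt_aleph0.trans_le (aleph0_le_aleph 2)
  refine ⟨(finite_singleton _).insert _, ?_, ?_, ?_⟩
  · intro x b b' h h'
    rcases mem_pB.mp h with h | h <;> rcases mem_pB.mp h' with h' | h' <;> simp_all
  · rw [asetR_pB, bsetR_pB]
    rintro α (rfl | rfl) _ rfl
    exacts [⟨true, by simp [mem_pB]⟩, ⟨false, by simp [mem_pB]⟩]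
  · intro z hz
    rcases mem_pB.mp hz with rfl | rfl
    exacts [⟨zero_lt_one.trans one_lt, hβ⟩, ⟨one_lt, hβ⟩]

/-- `p_β(0, β') = 1 > 0 = p_β(1, β')` violates the monotonicity `r ≤ p_β` demands on the new
column `β'`. -/
lemma not_leR_pB_of_pB_subset {β β' : Ordinal} {r : CondR} (hne : β ≠ β') (hsub : pB β' ⊆ r) :
    ¬leR r (pB β) := by
  rintro ⟨-, hmono⟩
  have h0 : (((0 : Ordinal), β'), true) ∈ r := hsub (mem_pB.mpr (Or.inl rfl))
  have h1 : (((1 : Ordinal), β'), false) ∈ r := hsub (mem_pB.mpr (Or.inr rfl))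
  have hβ' : β' ∉ bsetR (pB β) := by
    rw [bsetR_pB]
    exact Ne.symm hne
  have := hmono 0 1 β' true false (by simp [asetR_pB]) (by simp [asetR_pB]) zero_lt_one
    ⟨0, true, h0⟩ hβ' h0 h1
  exact absurd this (by decide)

lemma pB_incompatible {β β' : Ordinal} (hne : β ≠ β') :
    ¬∃ r, leR r (pB β) ∧ leR r (pB β') :=
  fun ⟨_, hr, hr'⟩ => not_leR_pB_of_pB_subset hne hr'.1 hr

lemma setOf_pB_eq_image :
    {p : CondR | ∃ β, β < (aleph 1).ord ∧ p = pB β} = pB '' Iio (aleph 1).ord := by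
  ext p
  simp [eq_comm]

lemma mk_setOf_pB : #{p : CondR | ∃ β, β < (aleph 1).ord ∧ p = pB β} = aleph.{1} 1 := by
  rw [setOf_pB_eq_image, mk_image_eq pB_injective, mk_Iio_ordinal, card_ord, lift_aleph]
  simp

/-- The family `{p_β : β < ω₁}` is an antichain of `P` of cardinality `ω₁`; in
particular, `P` does not satisfy the countable chain condition. -/
theorem chain_forcing_P_not_ccc :
    (∀ p ∈ {p : CondR | ∃ β, β < (Cardinal.aleph 1).ord ∧ p = pB β}, IsCondR p) ∧
    Set.Pairwise {p : CondR | ∃ β, β < (Cardinal.aleph 1).ord ∧ p = pB β}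
      (fun p q => ¬∃ r, IsCondR r ∧ leR r p ∧ leR r q) ∧
    Cardinal.mk {p : CondR | ∃ β, β < (Cardinal.aleph 1).ord ∧ p = pB β} =
      Cardinal.aleph.{1} 1 ∧
    ¬∀ A : Set CondR, (∀ p ∈ A, IsCondR p) →
      (A.Pairwise fun p q => ¬∃ r, IsCondR r ∧ leR r p ∧ leR r q) → A.Countable := by
  have hcond : ∀ p ∈ {p : CondR | ∃ β, β < (aleph 1).ord ∧ p = pB β}, IsCondR p := by
    rintro p ⟨β, hβ, rfl⟩
    exact isCondR_pB hβ
  have hanti : Set.Pairwise {p : CondR | ∃ β, β < (aleph 1).ord ∧ p = pB β}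
      (fun p q => ¬∃ r, IsCondR r ∧ leR r p ∧ leR r q) := by
    rintro p ⟨β, -, rfl⟩ q ⟨β', -, rfl⟩ hne ⟨r, -, hr⟩
    exact pB_incompatible (fun h => hne (congrArg pB h)) ⟨r, hr⟩
  refine ⟨hcond, hanti, mk_setOf_pB, fun hccc => ?_⟩
  have hle := le_aleph0_iff_set_countable.2 (hccc _ hcond hanti)
  rw [mk_setOf_pB] at hle
  exact not_le.2 aleph0_lt_aleph_one hle
end
end
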